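/- For the modulo-additive binary channel Y = X ⊕ S ⊕ N, Z = X ⊕ S ⊕ N_z with S ~ Bern(p_s), N ~ Bern(p_n), N_z ~ Bern(p_{n_z}), all independent, if p_n ≤ p_{n_z} then for every conditional distribution p(x|s): I(S; Y) - I(S; Z) ≤ H(p_{n_z}) - H(p_n), where H is the binary entropy function. -/

import Mathlib

open scoped BigOperators

/-- The distribution (pmf) of a random variable `X : Ω → α` under the pmf `μ` on
a finite sample space `Ω`. -/
noncomputable def distOf {Ω α : Type*} [Fintype Ω] [DecidableEq α]
    (μ : Ω → ℝ) (X : Ω → α) (a : α) : ℝ :=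
  ∑ ω : Ω, if X ω = a then μ ω else 0

/-- `μ` is a probability mass function on the finite space `Ω`. -/
def IsPMF {Ω : Type*} [Fintype Ω] (μ : Ω → ℝ) : Prop :=
  (∀ ω, 0 ≤ μ ω) ∧ ∑ ω : Ω, μ ω = 1

/-- Shannon entropy (in nats) of the random variable `X` under the pmf `μ`
(with the convention `0 log 0 = 0`, which holds for `Real.log`). -/
noncomputable def entropy {Ω α : Type*} [Fintype Ω] [Fintype α] [DecidableEq α]
    (μ : Ω → ℝ) (X : Ω → α) : ℝ :=
  -∑ a : α, distOf μ X a * Real.log (distOf μ X a)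

/-- Mutual information `I(X;Y) = H(X) + H(Y) - H(X,Y)`. -/
noncomputable def mutInfo {Ω α β : Type*} [Fintype Ω] [Fintype α] [DecidableEq α]
    [Fintype β] [DecidableEq β] (μ : Ω → ℝ) (X : Ω → α) (Y : Ω → β) : ℝ :=
  entropy μ X + entropy μ Y - entropy μ (fun ω => (X ω, Y ω))

/-- Conditional mutual information
`I(X;Y|Z) = H(X,Z) + H(Y,Z) - H(X,Y,Z) - H(Z)`. -/
noncomputable def condMutInfo {Ω α β γ : Type*} [Fintype Ω]
    [Fintype α] [DecidableEq α] [Fintype β] [DecidableEq β]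
    [Fintype γ] [DecidableEq γ]
    (μ : Ω → ℝ) (X : Ω → α) (Y : Ω → β) (Z : Ω → γ) : ℝ :=
  entropy μ (fun ω => (X ω, Z ω)) + entropy μ (fun ω => (Y ω, Z ω)) -
    entropy μ (fun ω => (X ω, Y ω, Z ω)) - entropy μ Z

/-- Two random variables are independent under the pmf `μ`. -/
def IndepRV {Ω α β : Type*} [Fintype Ω] [DecidableEq α] [DecidableEq β]
    (μ : Ω → ℝ) (X : Ω → α) (Y : Ω → β) : Prop :=
  ∀ a b, distOf μ (fun ω => (X ω, Y ω)) (a, b) = distOf μ X a * distOf μ Y b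

/-- Binary entropy function. -/
noncomputable def binEnt (x : ℝ) : ℝ := -x * Real.log x - (1 - x) * Real.log (1 - x)

/-!
Put `U = X ⊕ S`. Since the noises are independent of `(X, S)`, every row `S = s` of the joint
law of `(S, Y)`, as well as the law of `Y` itself, is the image of the corresponding masses of `U`
under a binary symmetric channel with crossover probability `p_n`; likewise for `Z` with `p_{n_z}`.
Hence `I(S;Y) - I(S;Z) = [H(Y) - H(Z)] + ∑ₛ P(S = s) [H(Z | S = s) - H(Y | S = s)]`. The first
bracket is nonpositive because a channel with smaller crossover probability `≤ 1/2` produces less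
entropy. Each conditional difference is at most `H(p_{n_z}) - H(p_n)`: the output law is
`Bern(q ⋆ p)` with `q ⋆ p = q + (1 - 2q) p`, an affine contraction of `p` towards `1/2`, and the
increments of the concave function `H` decrease to the right.
-/

open Real Finset

theorem ConcaveOn.map_add_sub_map_le {s : Set ℝ} {f : ℝ → ℝ} (hf : ConcaveOn ℝ s f)
    {x y d : ℝ} (hx : x ∈ s) (hyd : y + d ∈ s) (hxy : x ≤ y) (hd : 0 ≤ d) :
    f (y + d) - f y ≤ f (x + d) - f x := by
  rcases hd.eq_or_lt with rfl | hd
  · simp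
  have hy : y ∈ s := hf.1.ordConnected.out hx hyd ⟨hxy, by linarith⟩
  have hxd : x + d ∈ s := hf.1.ordConnected.out hx hyd ⟨by linarith, by linarith⟩
  have hx_lt : x < x + d := by linarith
  have hxd_lt : x + d ≤ y + d := by linarith
  have hy_lt : y < y + d := by linarith
  have h₁ : slope f x (y + d) ≤ slope f x (x + d) :=
    hf.slope_anti hx ⟨hxd, hx_lt.ne'⟩ ⟨hyd, (hx_lt.trans_le hxd_lt).ne'⟩ hxd_lt
  have h₂ : slope f (y + d) y ≤ slope f (y + d) x :=
    hf.slope_anti hyd ⟨hx, (hx_lt.trans_le hxd_lt).ne⟩ ⟨hy, hy_lt.ne⟩ hxy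
  rw [slope_comm f (y + d) x, slope_comm f (y + d) y] at h₂
  have key := h₂.trans h₁
  simp only [slope_def_field, add_sub_cancel_left] at key
  exact (div_le_div_iff_of_pos_right hd).1 key

lemma binEnt_eq_binEntropy : binEnt = binEntropy := by
  ext x
  simp only [binEnt, binEntropy, log_inv, neg_mul, mul_neg]
  ring

/-- The binary convolution `q ⋆ p`: the crossover probability of two cascaded binary symmetric
channels. -/
noncomputable def binConv (q p : ℝ) : ℝ := q * (1 - p) + (1 - q) * p

lemma binEntropy_binConv_one_sub (q p : ℝ) :
    binEntropy (binConv (1 - q) p) = binEntropy (binConv q p) := by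
  rw [← binEntropy_one_sub]; unfold binConv; ring_nf

lemma binConv_mem_Icc {q p : ℝ} (hq₀ : 0 ≤ q) (hq : q ≤ 1 / 2) (hp : p ≤ 1 / 2) :
    binConv q p ∈ Set.Icc p (1 / 2) := by
  unfold binConv; constructor <;> nlinarith

section binConv
variable {q pn pnz : ℝ}

lemma binEntropy_binConv_le (hq₀ : 0 ≤ q) (hq₁ : q ≤ 1) (hpn : 0 ≤ pn) (hle : pn ≤ pnz)
    (hpnz : pnz ≤ 1 / 2) :
    binEntropy (binConv q pn) ≤ binEntropy (binConv q pnz) := by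
  wlog hq : q ≤ 1 / 2 generalizing q
  · simpa [binEntropy_binConv_one_sub] using this (q := 1 - q) (by linarith) (by linarith)
      (by linarith)
  have hA := binConv_mem_Icc hq₀ hq (hle.trans hpnz)
  have hB := binConv_mem_Icc hq₀ hq hpnz
  refine binEntropy_strictMonoOn.monotoneOn ⟨by linarith [hA.1], by linarith [hA.2]⟩
    ⟨by linarith [hB.1], by linarith [hB.2]⟩ ?_
  unfold binConv; nlinarith

lemma binEntropy_binConv_sub_le (hq₀ : 0 ≤ q) (hq₁ : q ≤ 1) (hpn : 0 ≤ pn) (hle : pn ≤ pnz)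
    (hpnz : pnz ≤ 1 / 2) :
    binEntropy (binConv q pnz) - binEntropy (binConv q pn) ≤ binEntropy pnz - binEntropy pn := by
  wlog hq : q ≤ 1 / 2 generalizing q
  · simpa [binEntropy_binConv_one_sub] using this (q := 1 - q) (by linarith) (by linarith)
      (by linarith)
  set d := binConv q pnz - binConv q pn
  have hd : d = (1 - 2 * q) * (pnz - pn) := by unfold d binConv; ring
  have hA := binConv_mem_Icc hq₀ hq (hle.trans hpnz)
  have hB := binConv_mem_Icc hq₀ hq hpnz
  calc binEntropy (binConv q pnz) - binEntropy (binConv q pn)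
      = binEntropy (binConv q pn + d) - binEntropy (binConv q pn) := by simp [d]
    _ ≤ binEntropy (pn + d) - binEntropy pn :=
      strictConcave_binEntropy.concaveOn.map_add_sub_map_le ⟨hpn, by linarith⟩
        (by simp only [d, add_sub_cancel]; constructor <;> linarith [hB.1, hB.2]) hA.1
        (by rw [hd]; nlinarith)
    _ ≤ binEntropy pnz - binEntropy pn := by
      gcongr
      exact binEntropy_strictMonoOn.monotoneOn ⟨by nlinarith, by nlinarith⟩
        ⟨by linarith, by linarith⟩ (by rw [hd]; nlinarith)

end binConv

/-- The input masses `a₀, a₁` need not sum to `1`: they are the rows of a joint law. -/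
noncomputable def bscOutputEntropy (a₀ a₁ p : ℝ) : ℝ :=
  negMulLog ((1 - p) * a₀ + p * a₁) + negMulLog (p * a₀ + (1 - p) * a₁)

lemma bscOutputEntropy_mul (m q p : ℝ) :
    bscOutputEntropy (m * (1 - q)) (m * q) p = m * binEntropy (binConv q p) + negMulLog m := by
  have h₀ : (1 - p) * (m * (1 - q)) + p * (m * q) = m * (1 - binConv q p) := by
    unfold binConv; ring
  have h₁ : p * (m * (1 - q)) + (1 - p) * (m * q) = m * binConv q p := by
    unfold binConv; ring
  rw [bscOutputEntropy, h₀, h₁, negMulLog_mul, negMulLog_mul,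
    binEntropy_eq_negMulLog_add_negMulLog_one_sub]
  ring

lemma exists_eq_mul_one_sub_and_eq_mul {a₀ a₁ : ℝ} (ha₀ : 0 ≤ a₀) (ha₁ : 0 ≤ a₁) :
    ∃ m q, 0 ≤ m ∧ 0 ≤ q ∧ q ≤ 1 ∧ a₀ = m * (1 - q) ∧ a₁ = m * q := by
  rcases (add_nonneg ha₀ ha₁).eq_or_lt with hm | hm
  · exact ⟨0, 0, le_rfl, le_rfl, zero_le_one, by linarith, by linarith⟩
  refine ⟨a₀ + a₁, a₁ / (a₀ + a₁), hm.le, by positivity,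
    (div_le_one hm).2 (by linarith), ?_, by field_simp⟩
  field_simp
  ring

section bscOutputEntropy
variable {a₀ a₁ pn pnz : ℝ}

lemma bscOutputEntropy_mono (ha₀ : 0 ≤ a₀) (ha₁ : 0 ≤ a₁) (hpn : 0 ≤ pn) (hle : pn ≤ pnz)
    (hpnz : pnz ≤ 1 / 2) :
    bscOutputEntropy a₀ a₁ pn ≤ bscOutputEntropy a₀ a₁ pnz := by
  obtain ⟨m, q, hm, hq₀, hq₁, rfl, rfl⟩ := exists_eq_mul_one_sub_and_eq_mul ha₀ ha₁
  rw [bscOutputEntropy_mul, bscOutputEntropy_mul]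
  gcongr
  exact binEntropy_binConv_le hq₀ hq₁ hpn hle hpnz

lemma bscOutputEntropy_sub_le (ha₀ : 0 ≤ a₀) (ha₁ : 0 ≤ a₁) (hpn : 0 ≤ pn) (hle : pn ≤ pnz)
    (hpnz : pnz ≤ 1 / 2) :
    bscOutputEntropy a₀ a₁ pnz - bscOutputEntropy a₀ a₁ pn ≤
      (a₀ + a₁) * (binEntropy pnz - binEntropy pn) := by
  obtain ⟨m, q, hm, hq₀, hq₁, rfl, rfl⟩ := exists_eq_mul_one_sub_and_eq_mul ha₀ ha₁
  rw [bscOutputEntropy_mul, bscOutputEntropy_mul]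
  linear_combination mul_le_mul_of_nonneg_left (binEntropy_binConv_sub_le hq₀ hq₁ hpn hle hpnz) hm

end bscOutputEntropy

section distOf
variable {Ω α β γ : Type*} [Fintype Ω] [DecidableEq α] [DecidableEq β] [DecidableEq γ]
  {μ : Ω → ℝ}

lemma distOf_nonneg (hμ : ∀ ω, 0 ≤ μ ω) (X : Ω → α) (a : α) : 0 ≤ distOf μ X a :=
  sum_nonneg fun ω _ => by split_ifs <;> simp [hμ ω]

lemma sum_distOf [Fintype α] (X : Ω → α) : ∑ a, distOf μ X a = ∑ ω, μ ω := by
  unfold distOf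
  rw [sum_comm]
  simp

lemma distOf_comp [Fintype α] (g : α → β) (X : Ω → α) (b : β) :
    distOf μ (fun ω => g (X ω)) b = ∑ a, if g a = b then distOf μ X a else 0 := by
  unfold distOf
  simp_rw [ite_sum_zero, ← ite_and]
  rw [sum_comm]
  refine sum_congr rfl fun ω _ => ?_
  simp [and_comm, ite_and]

lemma sum_distOf_pair_fst [Fintype α] [Fintype β] (W : Ω → α) (V : Ω → β) (b : β) :
    ∑ a, distOf μ (fun ω => (W ω, V ω)) (a, b) = distOf μ V b := by
  refine Eq.symm <| (distOf_comp Prod.snd (fun ω => (W ω, V ω)) b).trans ?_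
  rw [Fintype.sum_prod_type]
  simp

lemma IndepRV.comp_right [Fintype α] [Fintype β] {A : Ω → α} {B : Ω → β}
    (h : IndepRV μ A B) (g : β → γ) : IndepRV μ A (fun ω => g (B ω)) := by
  intro a c
  refine (distOf_comp (Prod.map id g) (fun ω => (A ω, B ω)) (a, c)).trans ?_
  rw [distOf_comp g B c, Fintype.sum_prod_type, mul_sum]
  simp [h _ _, ite_and]

lemma IndepRV.comp_left [Fintype α] [Fintype β] {A : Ω → α} {B : Ω → β}
    (h : IndepRV μ A B) (g : α → γ) : IndepRV μ (fun ω => g (A ω)) B := by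
  intro c b
  refine (distOf_comp (Prod.map g id) (fun ω => (A ω, B ω)) (c, b)).trans ?_
  rw [distOf_comp g A c, Fintype.sum_prod_type, sum_mul]
  simp [h _ _, ite_and]

lemma distOf_pair_add_of_indep [AddGroup β] [Fintype β] {V : Ω → α} {W N : Ω → β}
    (h : IndepRV μ N (fun ω => (W ω, V ω))) (v : α) (y : β) :
    distOf μ (fun ω => (V ω, W ω + N ω)) (v, y) =
      ∑ n, distOf μ N n * distOf μ (fun ω => (W ω, V ω)) (y - n, v) := by
  simp_rw [← h _ (_, v)]
  unfold distOf
  rw [sum_comm]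
  refine sum_congr rfl fun ω _ => ?_
  simp [ite_and, eq_sub_iff_add_eq, and_comm]

lemma entropy_eq_sum_negMulLog [Fintype α] (X : Ω → α) :
    entropy μ X = ∑ a, negMulLog (distOf μ X a) := by
  simp [entropy, negMulLog, sum_neg_distrib]

end distOf

lemma sum_zmod_two {M : Type*} [AddCommMonoid M] (f : ZMod 2 → M) : ∑ a, f a = f 0 + f 1 :=
  Fin.sum_univ_two f

section binaryChannel
variable {Ω α : Type*} [Fintype Ω] [Fintype α] [DecidableEq α] {μ : Ω → ℝ}

lemma distOf_zero_zmod_two (hμ : IsPMF μ) (N : Ω → ZMod 2) :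
    distOf μ N 0 = 1 - distOf μ N 1 := by
  have := sum_distOf (μ := μ) N
  rw [sum_zmod_two, hμ.2] at this
  linarith

variable {V : Ω → α} {W N N' : Ω → ZMod 2}

lemma entropy_pair_add_zmod_two (hμ : IsPMF μ) (h : IndepRV μ N (fun ω => (W ω, V ω))) :
    entropy μ (fun ω => (V ω, W ω + N ω)) =
      ∑ v, bscOutputEntropy (distOf μ (fun ω => (W ω, V ω)) (0, v))
        (distOf μ (fun ω => (W ω, V ω)) (1, v)) (distOf μ N 1) := by
  rw [entropy_eq_sum_negMulLog, Fintype.sum_prod_type]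
  refine sum_congr rfl fun v _ => ?_
  have h01 : (0 : ZMod 2) - 1 = 1 := rfl
  simp only [sum_zmod_two, distOf_pair_add_of_indep h, distOf_zero_zmod_two hμ N, sub_zero, h01,
    sub_self, bscOutputEntropy]
  ring_nf

lemma entropy_add_zmod_two (hμ : IsPMF μ) (h : IndepRV μ N (fun ω => (W ω, V ω))) :
    entropy μ (fun ω => W ω + N ω) =
      bscOutputEntropy (∑ v, distOf μ (fun ω => (W ω, V ω)) (0, v))
        (∑ v, distOf μ (fun ω => (W ω, V ω)) (1, v)) (distOf μ N 1) := by
  have h01 : (0 : ZMod 2) - 1 = 1 := rfl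
  rw [entropy_eq_sum_negMulLog, sum_zmod_two, ← sum_distOf_pair_fst V, ← sum_distOf_pair_fst V]
  simp only [sum_zmod_two, distOf_pair_add_of_indep h, distOf_zero_zmod_two hμ N, sub_zero, h01,
    sub_self, bscOutputEntropy, mul_sum, ← sum_add_distrib]
  congr 2
  exact sum_congr rfl fun _ _ => by ring

theorem mutInfo_add_sub_mutInfo_add_le (hμ : IsPMF μ) (hN : IndepRV μ N (fun ω => (W ω, V ω)))
    (hN' : IndepRV μ N' (fun ω => (W ω, V ω))) (hle : distOf μ N 1 ≤ distOf μ N' 1)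
    (hN'_le : distOf μ N' 1 ≤ 1 / 2) :
    mutInfo μ V (fun ω => W ω + N ω) - mutInfo μ V (fun ω => W ω + N' ω) ≤
      binEntropy (distOf μ N' 1) - binEntropy (distOf μ N 1) := by
  set r := fun u v => distOf μ (fun ω => (W ω, V ω)) (u, v)
  have hr : ∀ u v, 0 ≤ r u v := fun u v => distOf_nonneg hμ.1 _ _
  have hr_sum : ∑ v, (r 0 v + r 1 v) = 1 :=
    calc ∑ v, (r 0 v + r 1 v) = ∑ u, ∑ v, r u v := by rw [sum_zmod_two, sum_add_distrib]
      _ = ∑ ω, μ ω := by rw [← Fintype.sum_prod_type']; exact sum_distOf _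
      _ = 1 := hμ.2
  have hN_nonneg := distOf_nonneg hμ.1 N 1
  have hmarg := bscOutputEntropy_mono (Fintype.sum_nonneg (hr 0)) (Fintype.sum_nonneg (hr 1))
    hN_nonneg hle hN'_le
  have hrows : ∑ v, bscOutputEntropy (r 0 v) (r 1 v) (distOf μ N' 1) -
      ∑ v, bscOutputEntropy (r 0 v) (r 1 v) (distOf μ N 1) ≤
      binEntropy (distOf μ N' 1) - binEntropy (distOf μ N 1) := by
    rw [← sum_sub_distrib, ← one_mul (_ - _), ← hr_sum, sum_mul]
    exact sum_le_sum fun v _ => bscOutputEntropy_sub_le (hr 0 v) (hr 1 v) hN_nonneg hle hN'_le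
  unfold mutInfo
  rw [entropy_add_zmod_two hμ hN, entropy_add_zmod_two hμ hN', entropy_pair_add_zmod_two hμ hN,
    entropy_pair_add_zmod_two hμ hN']
  linarith

end binaryChannel

theorem binary_diff_amp_bound_general {Ω : Type*} [Fintype Ω] (μ : Ω → ℝ) (hμ : IsPMF μ)
    (X S N Nz : Ω → ZMod 2) (pn pnz : ℝ)
    (hN : distOf μ N 1 = pn) (hNz : distOf μ Nz 1 = pnz)
    (hpnz : pnz ≤ 1 / 2)
    (hindep : IndepRV μ (fun ω => (N ω, Nz ω)) (fun ω => (X ω, S ω)))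
    (hdeg : pn ≤ pnz) :
    mutInfo μ S (fun ω => X ω + S ω + N ω) -
      mutInfo μ S (fun ω => X ω + S ω + Nz ω) ≤ binEnt pnz - binEnt pn := by
  subst hN hNz
  have hXS (M : Ω → ZMod 2) (h : IndepRV μ M (fun ω => (X ω, S ω))) :
      IndepRV μ M (fun ω => (X ω + S ω, S ω)) :=
    h.comp_right fun xs => (xs.1 + xs.2, xs.2)
  rw [binEnt_eq_binEntropy]
  exact mutInfo_add_sub_mutInfo_add_le hμ (hXS N (hindep.comp_left Prod.fst))
    (hXS Nz (hindep.comp_left Prod.snd)) hdeg hpnz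

/-- For the modulo-additive binary channel `Y = X ⊕ S ⊕ N`, `Z = X ⊕ S ⊕ N_z`
with `S ~ Bern(p_s)`, `N ~ Bern(p_n)`, `N_z ~ Bern(p_{n_z})`, the pair
`(N, N_z)` independent of `(X,S)` and `N` independent of `N_z` (so that
`S, N, N_z` are mutually independent and `X` may depend on `S` arbitrarily):
if `p_n ≤ p_{n_z}` then `I(S;Y) − I(S;Z) ≤ H(p_{n_z}) − H(p_n)`. -/
theorem binary_diff_amp_bound {Ω : Type*} [Fintype Ω] (μ : Ω → ℝ) (hμ : IsPMF μ)
    (X S N Nz : Ω → ZMod 2) (ps pn pnz : ℝ)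
    (hS : distOf μ S 1 = ps) (hN : distOf μ N 1 = pn) (hNz : distOf μ Nz 1 = pnz)
    (hps : ps ≤ 1 / 2) (hpn : pn ≤ 1 / 2) (hpnz : pnz ≤ 1 / 2)
    (hindep : IndepRV μ (fun ω => (N ω, Nz ω)) (fun ω => (X ω, S ω)))
    (hNNz : IndepRV μ N Nz)
    (hdeg : pn ≤ pnz) :
    mutInfo μ S (fun ω => X ω + S ω + N ω) -
      mutInfo μ S (fun ω => X ω + S ω + Nz ω) ≤ binEnt pnz - binEnt pn :=
  binary_diff_amp_bound_general μ hμ X S N Nz pn pnz hN hNz hpnz hindep hdeg
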